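/- Let u ∈ ℤ[P]. If j_w(u) = 0 for every w ∈ W, then u = 0. -/

import Mathlib

open scoped BigOperators

namespace AffineKM

/-- An indecomposable generalized Cartan matrix of affine type, together with a
choice of positive integers `(a_i)` and `(a_i^∨)` annihilating it on the right
and on the left. -/
structure AffineData (I : Type) [Fintype I] [DecidableEq I] where
  a : I → I → ℤ
  apos : I → ℤ
  avee : I → ℤ
  diag : ∀ i, a i i = 2
  offdiag_nonpos : ∀ i j, i ≠ j → a i j ≤ 0
  zero_iff : ∀ i j, a i j = 0 ↔ a j i = 0
  connected : ∀ s : Set I, s.Nonempty → sᶜ.Nonempty → ∃ i ∈ s, ∃ j ∈ sᶜ, a i j ≠ 0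
  apos_pos : ∀ i, 0 < apos i
  avee_pos : ∀ i, 0 < avee i
  row_zero : ∀ i, (∑ j, a i j * apos j) = 0
  col_zero : ∀ j, (∑ i, avee i * a i j) = 0

variable {I : Type} [Fintype I] [DecidableEq I]

/-- The (multiplicative) group structure on `AddAut M` that Mathlib provided when this file
was written (composition as multiplication); current Mathlib makes `AddAut M` an additive
group instead. -/
instance addAutGroupOld {M : Type} [Add M] : Group (AddAut M) where
  mul g h := AddEquiv.trans h g
  one := AddEquiv.refl _
  inv := AddEquiv.symm
  mul_assoc _ _ _ := rfl
  one_mul _ := rfl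
  mul_one _ := rfl
  inv_mul_cancel := AddEquiv.self_trans_symm

@[simp]
theorem addAutGroupOld_inv_apply {M : Type} [Add M] (e : AddAut M) (m : M) :
    e⁻¹ m = e.symm m := rfl

@[simp]
theorem addAutGroupOld_mul_apply {M : Type} [Add M] (e₁ e₂ : AddAut M) (m : M) :
    (e₁ * e₂) m = e₁ (e₂ m) := rfl

@[simp]
theorem addAutGroupOld_one_apply {M : Type} [Add M] (m : M) : (1 : AddAut M) m = m := rfl

/-- The weight lattice `P`, free on the `Λ_i` and the `α_i`: the first component
records the coordinates with respect to the basis `{Λ_i}`, the second component the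
coordinates with respect to the basis `{α_i}`. -/
abbrev P (I : Type) := (I → ℤ) × (I → ℤ)

/-- The fundamental weight `Λ_i`. -/
def Lambda (i : I) : P I := (Pi.single i 1, 0)

/-- The simple root `α_i`. -/
def alphaRt (i : I) : P I := (0, Pi.single i 1)

/-- A weight lies in `Q = ⊕ ℤα_i` iff its `Λ`-coordinates vanish. -/
def inQ (lam : P I) : Prop := lam.1 = 0

namespace AffineData

variable (D : AffineData I)

/-- The pairing `⟨h_i, λ⟩` with the simple coroot `h_i`. -/
def coroot (i : I) (lam : P I) : ℤ := lam.1 i + ∑ j, D.a i j * lam.2 j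

lemma coroot_add (i : I) (x y : P I) :
    D.coroot i (x + y) = D.coroot i x + D.coroot i y := by
  simp only [coroot, Prod.fst_add, Prod.snd_add, Pi.add_apply, mul_add,
    Finset.sum_add_distrib]
  ring

lemma coroot_zsmul (i : I) (z : ℤ) (x : P I) :
    D.coroot i (z • x) = z * D.coroot i x := by
  simp only [coroot, Prod.smul_fst, Prod.smul_snd, Pi.smul_apply, smul_eq_mul,
    mul_add, Finset.mul_sum]
  congr 1
  apply Finset.sum_congr rfl
  intro j _
  ring

lemma coroot_alpha_self (i : I) : D.coroot i (alphaRt i) = 2 := by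
  simp only [coroot, alphaRt, Pi.zero_apply, zero_add]
  rw [Finset.sum_eq_single i]
  · simp [D.diag]
  · intro j _ hj
    simp [Pi.single_apply, Ne.symm hj]
  · intro h; exact absurd (Finset.mem_univ i) h

lemma refl_aux (i : I) (lam : P I) :
    (lam - D.coroot i lam • alphaRt i)
      - D.coroot i (lam - D.coroot i lam • alphaRt i) • alphaRt i = lam := by
  have h1 : D.coroot i (lam - D.coroot i lam • alphaRt i)
      = - D.coroot i lam := by
    have h0 := D.coroot_add i (lam - D.coroot i lam • alphaRt i)
      (D.coroot i lam • alphaRt i)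
    simp only [sub_add_cancel] at h0
    have h2 : D.coroot i (D.coroot i lam • alphaRt i) = 2 * D.coroot i lam := by
      rw [D.coroot_zsmul, D.coroot_alpha_self]; ring
    omega
  rw [h1, neg_zsmul]
  abel

/-- The simple reflection `s_i : λ ↦ λ - ⟨h_i,λ⟩ α_i`, as an automorphism of `P`. -/
def refl (i : I) : AddAut (P I) where
  toFun lam := lam - D.coroot i lam • alphaRt i
  invFun lam := lam - D.coroot i lam • alphaRt i
  left_inv lam := D.refl_aux i lam
  right_inv lam := D.refl_aux i lam
  map_add' x y := by
    rw [D.coroot_add, add_zsmul]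
    abel

/-- The affine Weyl group, as a subgroup of the automorphism group of `P`. -/
def weyl : Subgroup (AddAut (P I)) := Subgroup.closure (Set.range D.refl)

/-- The simple reflection `s_i` as an element of the Weyl group. -/
def sgen (i : I) : D.weyl := ⟨D.refl i, Subgroup.subset_closure ⟨i, rfl⟩⟩

/-- The length of an element of the Weyl group: the minimal length of an
expression as a product of simple reflections. -/
noncomputable def len (w : D.weyl) : ℕ :=
  sInf {n | ∃ l : List I, l.length = n ∧ (w : AddAut (P I)) = (l.map D.refl).prod}

/-- The null root `δ = Σ a_i α_i`. -/
def delta : P I := (0, D.apos)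

/-- The pairing `⟨c, λ⟩` with the canonical central element `c = Σ a_i^∨ h_i`. -/
def cpair (lam : P I) : ℤ := ∑ i, D.avee i * D.coroot i lam

/-- The dual Coxeter number `κ* = ⟨c, ρ⟩ = Σ a_i^∨`. -/
def kstar : ℤ := ∑ i, D.avee i

/-- λ ∈ P is regular if `⟨c,λ⟩ ≠ 0` and `⟨h_i, wλ⟩ ≠ 0` for all `w ∈ W`, `i ∈ I`. -/
def IsRegularWt (lam : P I) : Prop :=
  D.cpair lam ≠ 0 ∧ ∀ w ∈ D.weyl, ∀ i : I, D.coroot i (w lam) ≠ 0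

/-- The `W`-orbit of a weight. -/
def orb (lam : P I) : Set (P I) := {mu | ∃ w ∈ D.weyl, w lam = mu}

end AffineData

/-- The group algebra `ℤ[P]`. -/
abbrev ZP (I : Type) [Fintype I] [DecidableEq I] := AddMonoidAlgebra ℤ (P I)

/-- The basis element `e^λ` of `ℤ[P]`. -/
noncomputable def expw (lam : P I) : ZP I := AddMonoidAlgebra.single lam 1

/-- The action of an automorphism `w` of `P` on the group algebra `ℤ[P]`,
`e^λ ↦ e^{wλ}`, as a ring homomorphism. -/
noncomputable def wact (w : AddAut (P I)) : ZP I →+* ZP I :=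
  AddMonoidAlgebra.mapDomainRingHom ℤ w.toAddMonoidHom

lemma wact_single (w : AddAut (P I)) (lam : P I) (c : ℤ) :
    wact w (AddMonoidAlgebra.single lam c) = AddMonoidAlgebra.single (w lam) c := by
  simp [wact, AddMonoidAlgebra.mapDomainRingHom, Finsupp.mapDomain_single]


namespace AffineData

variable (D : AffineData I)

lemma coroot_delta (i : I) : D.coroot i D.delta = 0 := by
  simp only [coroot, delta, Pi.zero_apply, zero_add]
  exact D.row_zero i

lemma refl_apply (i : I) (lam : P I) :
    D.refl i lam = lam - D.coroot i lam • alphaRt i := rfl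

lemma refl_delta (i : I) : D.refl i D.delta = D.delta := by
  rw [refl_apply, D.coroot_delta, zero_zsmul, sub_zero]

lemma weyl_fix_delta {w : AddAut (P I)} (hw : w ∈ D.weyl) : w D.delta = D.delta := by
  induction hw using Subgroup.closure_induction with
  | mem x hx => obtain ⟨i, rfl⟩ := hx; exact D.refl_delta i
  | one => rfl
  | mul x y hx hy ihx ihy =>
      show x (y D.delta) = D.delta
      rw [ihy, ihx]
  | inv x hx ih =>
      have : x⁻¹ (x D.delta) = x⁻¹ D.delta := by rw [ih]
      simpa using this.symm

lemma weyl_fix_zsmul_delta {w : AddAut (P I)} (hw : w ∈ D.weyl) (n : ℤ) :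
    w (n • D.delta) = n • D.delta := by
  rw [map_zsmul, D.weyl_fix_delta hw]

/-- The multiplicative set generated by the elements `e^{nδ} - 1`, `n ≥ 1`; `R ⊗_{ℤ[q,q⁻¹]} ℤ[P]`
is realized as the localization of `ℤ[P]` at this set. -/
noncomputable def denomSet : Submonoid (ZP I) :=
  Submonoid.closure {x | ∃ n : ℤ, 0 < n ∧ x = expw (n • D.delta) - 1}

/-- `R ⊗_{ℤ[q,q⁻¹]} ℤ[P]`, realized as the localization of `ℤ[P]` at the
multiplicative set generated by the `e^{nδ} - 1`, `n ≥ 1` (note that `q = e^δ` is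
already invertible in this ring). -/
noncomputable abbrev locZP := Localization D.denomSet

lemma wact_denom {w : AddAut (P I)} (hw : w ∈ D.weyl) :
    D.denomSet ≤ Submonoid.comap (wact w) D.denomSet := by
  rw [denomSet, Submonoid.closure_le]
  intro x hx
  obtain ⟨n, hn, rfl⟩ := hx
  simp only [Submonoid.coe_comap, Set.mem_preimage, SetLike.mem_coe]
  have : wact w (expw (n • D.delta) - 1) = expw (n • D.delta) - 1 := by
    rw [map_sub, map_one, expw, wact_single, D.weyl_fix_zsmul_delta hw]
  rw [this]
  exact Submonoid.subset_closure ⟨n, hn, rfl⟩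

/-- The action of `w ∈ W` on `R ⊗_{ℤ[q,q⁻¹]} ℤ[P]`. -/
noncomputable def wactM (w : D.weyl) : D.locZP →+* D.locZP :=
  IsLocalization.map (Localization D.denomSet) (wact (w : AddAut (P I)))
    (D.wact_denom w.2)

end AffineData

/-- The projection `P = L ⊕ Q → Q`, as an additive homomorphism. -/
def projQ : P I →+ P I where
  toFun lam := (0, lam.2)
  map_zero' := rfl
  map_add' x y := by simp [Prod.ext_iff]

/-- The ring homomorphism `j_e : ℤ[P] → ℤ[Q] ⊆ ℤ[P]`, `e^{λ+α} ↦ e^α` for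
`λ ∈ L`, `α ∈ Q`. -/
noncomputable def jeRing : ZP I →+* ZP I :=
  AddMonoidAlgebra.mapDomainRingHom ℤ (projQ (I := I))

/-- The ℤ-linear map `j_w : ℤ[P] → ℤ[Q] ⊆ ℤ[P]`, `e^{λ+α} ↦ e^{w(λ+α)-λ}` for
`λ ∈ L`, `α ∈ Q`. -/
noncomputable def jmap (w : AddAut (P I)) (u : ZP I) : ZP I :=
  AddMonoidAlgebra.ofCoeff (Finsupp.mapDomain (fun mu => w mu - (mu.1, 0)) u.coeff)

namespace AffineData

variable (D : AffineData I)

lemma je_denom : D.denomSet ≤ Submonoid.comap (jeRing (I := I)) D.denomSet := by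
  rw [denomSet, Submonoid.closure_le]
  intro x hx
  obtain ⟨n, hn, rfl⟩ := hx
  simp only [Submonoid.coe_comap, Set.mem_preimage, SetLike.mem_coe]
  have h1 : jeRing (expw (n • D.delta) - 1) = expw (n • D.delta) - 1 := by
    rw [map_sub, map_one, expw, jeRing]
    have : AddMonoidAlgebra.mapDomainRingHom ℤ (projQ (I := I))
        (AddMonoidAlgebra.single (n • D.delta) 1)
        = AddMonoidAlgebra.single (projQ (n • D.delta)) (1 : ℤ) := by
      simp [AddMonoidAlgebra.mapDomainRingHom, Finsupp.mapDomain_single]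
    rw [this]
    have h2 : projQ (n • D.delta) = n • D.delta := by
      show ((0 : I → ℤ), (n • D.delta).2) = n • D.delta
      simp [delta, Prod.ext_iff]
    rw [h2]
  rw [h1]
  exact Submonoid.subset_closure ⟨n, hn, rfl⟩

/-- The `R`-linear extension of `j_e` to `R ⊗_{ℤ[q,q⁻¹]} ℤ[P]`, with values in
`R ⊗_{ℤ[q,q⁻¹]} ℤ[Q] ⊆ R ⊗_{ℤ[q,q⁻¹]} ℤ[P]`. -/
noncomputable def jeLoc : D.locZP →+* D.locZP :=
  IsLocalization.map (Localization D.denomSet) (jeRing (I := I)) D.je_denom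

end AffineData



namespace AffineData

variable (D : AffineData I)

lemma coroot_alpha (i j : I) : D.coroot i (alphaRt j) = D.a i j := by
  simp only [coroot, alphaRt, Pi.zero_apply, zero_add]
  rw [Finset.sum_eq_single j]
  · simp
  · intro k _ hk; simp [Pi.single_apply, hk]
  · intro hj; exact absurd (Finset.mem_univ j) hj

lemma coroot_sub (i : I) (x y : P I) :
    D.coroot i (x - y) = D.coroot i x - D.coroot i y := by
  have h0 := D.coroot_add i (x - y) y
  simp only [sub_add_cancel] at h0
  omega

lemma cpair_refl (i : I) (mu : P I) : D.cpair (D.refl i mu) = D.cpair mu := by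
  have key : ∀ j, D.coroot j (D.refl i mu)
      = D.coroot j mu - D.coroot i mu * D.a j i := by
    intro j
    rw [refl_apply, D.coroot_sub, D.coroot_zsmul, D.coroot_alpha]
  simp only [cpair, key, mul_sub]
  rw [Finset.sum_sub_distrib]
  have h1 : ∑ j, D.avee j * (D.coroot i mu * D.a j i)
      = D.coroot i mu * ∑ j, D.avee j * D.a j i := by
    rw [Finset.mul_sum]; apply Finset.sum_congr rfl; intro j _; ring
  rw [h1, D.col_zero, mul_zero, sub_zero]

lemma cpair_weyl {w : AddAut (P I)} (hw : w ∈ D.weyl) :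
    ∀ mu : P I, D.cpair (w mu) = D.cpair mu := by
  induction hw using Subgroup.closure_induction with
  | mem x hx => obtain ⟨i, rfl⟩ := hx; exact fun mu => D.cpair_refl i mu
  | one => exact fun mu => rfl
  | mul x y hx hy ihx ihy =>
      intro mu
      show D.cpair (x (y mu)) = D.cpair mu
      rw [ihx, ihy]
  | inv x hx ih =>
      intro mu
      have h2 := ih ((x⁻¹ : AddAut (P I)) mu)
      rw [show x ((x⁻¹ : AddAut (P I)) mu) = mu from x.apply_symm_apply mu] at h2
      exact h2.symm

lemma weyl_fix_of_coroot_eq_zero {mu : P I} (hmu : ∀ i, D.coroot i mu = 0)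
    {w : AddAut (P I)} (hw : w ∈ D.weyl) : w mu = mu := by
  induction hw using Subgroup.closure_induction with
  | mem x hx =>
      obtain ⟨i, rfl⟩ := hx
      rw [refl_apply, hmu, zero_zsmul, sub_zero]
  | one => rfl
  | mul x y hx hy ihx ihy =>
      show x (y mu) = mu
      rw [ihy, ihx]
  | inv x hx ih =>
      have h2 : x⁻¹ (x mu) = x⁻¹ mu := by rw [ih]
      simpa using h2.symm

/-- The linear functional `μ ↦ Σ_i a_i^∨ (coefficient of α_i in the Q-part of μ)`. -/
def qsum (mu : P I) : ℤ := ∑ i, D.avee i * mu.2 i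

lemma qsum_refl (i : I) (mu : P I) :
    D.qsum (D.refl i mu) = D.qsum mu - D.avee i * D.coroot i mu := by
  have h2 : (D.refl i mu).2 = mu.2 - D.coroot i mu • Pi.single i 1 := rfl
  simp only [qsum, h2, Pi.sub_apply, Pi.smul_apply, smul_eq_mul, mul_sub,
    Finset.sum_sub_distrib]
  congr 1
  rw [Finset.sum_eq_single i]
  · simp [mul_comm]
  · intro j _ hj; simp [Pi.single_apply, hj]
  · intro hj; exact absurd (Finset.mem_univ i) hj

instance addAutMulActionOld {M : Type} [AddGroup M] : DistribMulAction (AddAut M) M where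
  smul e m := e m
  one_smul _ := rfl
  mul_smul _ _ _ := rfl
  smul_zero e := map_zero e
  smul_add e := map_add e

lemma orbit_infinite (lam : I → ℤ) (hlam : lam ≠ 0) :
    ¬ (MulAction.orbit D.weyl ((lam, 0) : P I)).Finite := by
  intro hfin
  set O : Set (P I) := MulAction.orbit D.weyl ((lam, 0) : P I) with hO
  have hne : O.Nonempty := ⟨_, MulAction.mem_orbit_self _⟩
  have hstep : ∀ ν ∈ O, ∀ i : I, D.refl i ν ∈ O := by
    intro ν hν i
    obtain ⟨g, rfl⟩ := hν
    refine ⟨D.sgen i * g, ?_⟩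
    show (D.sgen i * g) • ((lam, 0) : P I) = D.refl i (g • ((lam, 0) : P I))
    rw [mul_smul]
    rfl
  have hcp : ∀ ν ∈ O, D.cpair ν = D.cpair ((lam, 0) : P I) := by
    intro ν hν
    obtain ⟨g, rfl⟩ := hν
    exact D.cpair_weyl g.2 _
  obtain ⟨μ₁, hμ₁, hmin⟩ := Set.exists_min_image O D.qsum hfin hne
  obtain ⟨μ₂, hμ₂, hmax⟩ := Set.exists_max_image O D.qsum hfin hne
  have hneg : ∀ i, D.coroot i μ₁ ≤ 0 := by
    intro i
    have h1 := hmin _ (hstep μ₁ hμ₁ i)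
    rw [D.qsum_refl] at h1
    nlinarith [D.avee_pos i]
  have hpos : ∀ i, 0 ≤ D.coroot i μ₂ := by
    intro i
    have h1 := hmax _ (hstep μ₂ hμ₂ i)
    rw [D.qsum_refl] at h1
    nlinarith [D.avee_pos i]
  have e1 : D.cpair μ₁ ≤ 0 :=
    Finset.sum_nonpos fun i _ => by nlinarith [D.avee_pos i, hneg i]
  have e2 : (0 : ℤ) ≤ D.cpair μ₂ :=
    Finset.sum_nonneg fun i _ => by nlinarith [D.avee_pos i, hpos i]
  have hc0 : D.cpair μ₁ = 0 := by
    have hh1 := hcp μ₁ hμ₁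
    have hh2 := hcp μ₂ hμ₂
    omega
  have hcz : ∀ i, D.coroot i μ₁ = 0 := by
    intro i
    have hall := (Finset.sum_eq_zero_iff_of_nonpos
      (fun j _ => by nlinarith [D.avee_pos j, hneg j] :
        ∀ j ∈ Finset.univ, D.avee j * D.coroot j μ₁ ≤ 0)).mp hc0 i (Finset.mem_univ i)
    have hvne : D.avee i ≠ 0 := ne_of_gt (D.avee_pos i)
    exact (mul_eq_zero.mp hall).resolve_left hvne
  have hfix : ((lam, 0) : P I) = μ₁ := by
    obtain ⟨g, hg⟩ := hμ₁
    have h3 : (g⁻¹ : D.weyl) • μ₁ = ((lam, 0) : P I) := by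
      rw [← hg, inv_smul_smul]
    have h4 : (g⁻¹ : D.weyl) • μ₁ = μ₁ :=
      D.weyl_fix_of_coroot_eq_zero hcz (g⁻¹ : D.weyl).2
    rw [← h3, h4]
  apply hlam
  funext i
  have h5 := hcz i
  rw [← hfix] at h5
  simpa [coroot] using h5

end AffineData

open scoped Pointwise

/-- Lemma 10.2: if `u ∈ ℤ[P]` satisfies `j_w(u) = 0` for every `w ∈ W`, then `u = 0`. -/
theorem jmap_injective (D : AffineData I) (u : ZP I)
    (h : ∀ w ∈ D.weyl, jmap w u = 0) : u = 0 := by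
  classical
  by_contra hu
  -- every element of the Weyl group produces a collision on the support of `u`
  have hcol : ∀ w : D.weyl, ∃ p : P I × P I, p.1 ∈ u.coeff.support ∧ p.2 ∈ u.coeff.support ∧
      p.1 ≠ p.2 ∧ (w : D.weyl) • (p.1 - p.2) = (((p.1 - p.2).1, 0) : P I) := by
    intro w
    by_contra hcon
    push_neg at hcon
    have hinj : Set.InjOn (fun mu : P I => (w : AddAut (P I)) mu - (mu.1, 0))
        (u.coeff.support : Set (P I)) := by
      intro x hx y hy hxy
      by_contra hne
      refine hcon (x, y) hx hy hne ?_
      show (w : AddAut (P I)) (x - y) = ((x - y).1, 0)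
      rw [map_sub]
      dsimp only at hxy
      rw [sub_eq_sub_iff_sub_eq_sub] at hxy
      rw [hxy]
      show ((x.1, (0 : I → ℤ)) : P I) - (y.1, 0) = ((x - y).1, 0)
      simp [Prod.ext_iff]
    obtain ⟨mu0, hmu0⟩ := Finsupp.support_nonempty_iff.mpr (show u.coeff ≠ 0 by simpa using hu)
    have happ := Finsupp.mapDomain_apply' (u.coeff.support : Set (P I)) u.coeff
      subset_rfl hinj hmu0
    have hz : jmap (w : AddAut (P I)) u = 0 := h _ w.2
    rw [show Finsupp.mapDomain (fun mu : P I => (w : AddAut (P I)) mu - (mu.1, 0)) u.coeff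
      = (jmap (w : AddAut (P I)) u).coeff from rfl, hz] at happ
    exact Finsupp.mem_support_iff.mp hmu0 happ.symm
  -- the bad pairs give a coset cover of the Weyl group
  set pred : P I × P I → Prop :=
    fun p => ∃ g : D.weyl, g • (p.1 - p.2) = (((p.1 - p.2).1, 0) : P I) with hpred_def
  set T : Finset (P I × P I) :=
    (u.coeff.support ×ˢ u.coeff.support).filter (fun p => p.1 ≠ p.2 ∧ pred p) with hT
  set gg : P I × P I → D.weyl :=
    fun p => if hp : pred p then hp.choose else 1 with hgg
  set Hs : P I × P I → Subgroup D.weyl :=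
    fun p => MulAction.stabilizer D.weyl (p.1 - p.2) with hHs
  have hggspec : ∀ p : P I × P I, pred p →
      (gg p) • (p.1 - p.2) = (((p.1 - p.2).1, 0) : P I) := by
    intro p hp
    rw [hgg]
    simp only [dif_pos hp]
    exact hp.choose_spec
  have hcover : ⋃ p ∈ T, (gg p) • (Hs p : Set D.weyl) = Set.univ := by
    rw [Set.eq_univ_iff_forall]
    intro w
    obtain ⟨p, hp1, hp2, hp3, hp4⟩ := hcol w
    have hpredp : pred p := ⟨w, hp4⟩
    refine Set.mem_iUnion₂.mpr ⟨p, ?_, ?_⟩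
    · exact Finset.mem_filter.mpr ⟨Finset.mem_product.mpr ⟨hp1, hp2⟩, hp3, hpredp⟩
    · rw [mem_leftCoset_iff]
      show ((gg p)⁻¹ * w) • (p.1 - p.2) = p.1 - p.2
      rw [mul_smul, hp4, ← hggspec p hpredp, inv_smul_smul]
  obtain ⟨p, hpT, hfi⟩ := Subgroup.exists_finiteIndex_of_leftCoset_cover hcover
  obtain ⟨hpmem, hpne, hppred⟩ := Finset.mem_filter.mp hpT
  set ξ : P I := p.1 - p.2 with hxi
  have hξ : ξ ≠ 0 := sub_ne_zero.mpr hpne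
  obtain ⟨g, hg⟩ := hppred
  -- the stabilizer of ξ has finite index, so the orbit of ξ is finite
  haveI := hfi
  have horb : (MulAction.orbit D.weyl ξ).Finite := by
    haveI : Finite (MulAction.orbit D.weyl ξ) :=
      Finite.of_equiv _ (MulAction.orbitEquivQuotientStabilizer D.weyl ξ).symm
    exact (MulAction.orbit D.weyl ξ).toFinite
  have hmem : ((ξ.1, 0) : P I) ∈ MulAction.orbit D.weyl ξ := ⟨g, hg⟩
  have horb2 : (MulAction.orbit D.weyl ((ξ.1, 0) : P I)).Finite := by
    rwa [MulAction.orbit_eq_iff.mpr hmem]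
  by_cases hl : ξ.1 = 0
  · -- then ξ lies in Q and is sent to 0, contradicting injectivity of g
    have h0 : (g : D.weyl) • ξ = (0 : P I) := by
      rw [hg]; exact Prod.ext hl rfl
    have : ξ = 0 := by
      have := congrArg (fun x => (g⁻¹ : D.weyl) • x) h0
      simpa [inv_smul_smul] using this
    exact hξ this
  · exact D.orbit_infinite ξ.1 hl horb2

end AffineKM
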